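/- arXiv:2303.17000 — 6 statements merged into one kernel-verified Lean document; each statement's English description precedes it below -/
import Mathlib

section
/- Let n r : ℕ with r ≤ n and let S : Matrix (Fin r) (Fin (2*n)) ℤ be a matrix whose first r columns form the identity block, i.e. for all i j : Fin r, S i j = if i = j then 1 else 0 (as entries in the first r of the 2n columns). Define the corrected matrix S' by S' i (n + j) = S i (n + j) + (if (j : ℕ) < (i : ℕ) then ω(row i of S, row j of S) else 0) for j : Fin r, and S' i c = S i c for every other column c. Then: (a) for all i j : Fin r, ω(row i of S', row j of S') = 0 over the integers; and (b) for every q : ℕ, if q divides ω(row i of S, row j of S) for all i j, then S' i c ≡ S i c (mod q) for every entry (i, c). -/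
/-- The symplectic product of two integer vectors of length `2*n`:
`ω(u,v) = ∑_{t<n} (u t * v (n+t) − u (n+t) * v t)`. -/
def sympl (n : ℕ) (u v : Fin (2 * n) → ℤ) : ℤ :=
  ∑ t : Fin n,
    (u ⟨t.1, by have := t.2; omega⟩ * v ⟨n + t.1, by have := t.2; omega⟩ -
      u ⟨n + t.1, by have := t.2; omega⟩ * v ⟨t.1, by have := t.2; omega⟩)

lemma sympl_antisymm (n : ℕ) (u v : Fin (2 * n) → ℤ) :
    sympl n u v = - sympl n v u := by
  unfold sympl
  rw [← Finset.sum_neg_distrib]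
  exact Finset.sum_congr rfl fun t _ => by ring

/-- Theorem 1 of the paper (LDI form): adding the lower-triangular matrix of
symplectic products to the `Z₁` block of a canonical-form check matrix makes all
pairwise symplectic products vanish over `ℤ`, while changing each entry only by a
multiple of the original local dimension `q`. -/
theorem ldi_correction (n r : ℕ) (hrn : r ≤ n)
    (S : Matrix (Fin r) (Fin (2 * n)) ℤ)
    (hcanon : ∀ i j : Fin r,
      S i ⟨j.1, by have := j.2; omega⟩ = if i = j then 1 else 0)
    (S' : Matrix (Fin r) (Fin (2 * n)) ℤ)
    (hS' : S' = fun i c =>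
      S i c + if h : n ≤ c.1 ∧ c.1 - n < r ∧ c.1 - n < i.1 then
          sympl n (S i) (S ⟨c.1 - n, h.2.1⟩) else 0) :
    (∀ i j : Fin r, sympl n (S' i) (S' j) = 0) ∧
    (∀ q : ℕ, (∀ i j : Fin r, (q : ℤ) ∣ sympl n (S i) (S j)) →
      ∀ (i : Fin r) (c : Fin (2 * n)), S' i c ≡ S i c [ZMOD (q : ℤ)]) := by
  -- behavior of S' on low and high columns
  have hlow : ∀ (i : Fin r) (t : Fin n),
      S' i ⟨t.1, by have := t.2; omega⟩ = S i ⟨t.1, by have := t.2; omega⟩ := by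
    intro i t
    rw [hS']
    have : ¬ (n ≤ t.1 ∧ t.1 - n < r ∧ t.1 - n < i.1) := by
      have := t.2; omega
    simp [this]
  have hhigh : ∀ (i : Fin r) (t : Fin n),
      S' i ⟨n + t.1, by have := t.2; omega⟩ =
        S i ⟨n + t.1, by have := t.2; omega⟩ +
          (if h : t.1 < r ∧ t.1 < i.1 then sympl n (S i) (S ⟨t.1, h.1⟩) else 0) := by
    intro i t
    rw [hS']
    simp only [Nat.add_sub_cancel_left, Nat.le_add_right, true_and]
  constructor
  · intro i j
    have hi : i.1 < n := lt_of_lt_of_le i.2 hrn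
    have hj : j.1 < n := lt_of_lt_of_le j.2 hrn
    have keyL : ∀ (a b : Fin r) (t : Fin n),
        S a ⟨t.1, by have := t.2; omega⟩ *
          (if h : t.1 < r ∧ t.1 < b.1 then sympl n (S b) (S ⟨t.1, h.1⟩) else 0) =
        (if t = ⟨a.1, lt_of_lt_of_le a.2 hrn⟩ then
          (if a.1 < b.1 then sympl n (S b) (S a) else 0) else 0) := by
      intro a b t
      by_cases hr : t.1 < r
      · have hcan := hcanon a ⟨t.1, hr⟩
        by_cases hta : t.1 = a.1
        · have ht : t = (⟨a.1, lt_of_lt_of_le a.2 hrn⟩ : Fin n) := Fin.ext hta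
          have ha : a = (⟨t.1, hr⟩ : Fin r) := Fin.ext hta.symm
          rw [hcan, if_pos ha, one_mul, if_pos ht]
          by_cases hab : a.1 < b.1
          · rw [dif_pos ⟨hr, by omega⟩, if_pos hab]
            exact congrArg (fun x => sympl n (S b) (S x)) ha.symm
          · rw [dif_neg (by omega), if_neg hab]
        · have ha : a ≠ (⟨t.1, hr⟩ : Fin r) := fun h => hta (by rw [h])
          rw [hcan, if_neg ha, zero_mul]
          rw [if_neg (fun h => hta (by rw [h]))]
      · rw [dif_neg (by omega)]
        rw [if_neg (fun h => hr (by rw [h]; exact a.2)), mul_zero]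
    have expand : sympl n (S' i) (S' j) =
        sympl n (S i) (S j) +
          (if i.1 < j.1 then sympl n (S j) (S i) else 0) -
          (if j.1 < i.1 then sympl n (S i) (S j) else 0) := by
      unfold sympl
      have step : ∀ t : Fin n,
          S' i ⟨t.1, by have := t.2; omega⟩ * S' j ⟨n + t.1, by have := t.2; omega⟩ -
            S' i ⟨n + t.1, by have := t.2; omega⟩ * S' j ⟨t.1, by have := t.2; omega⟩ =
          (S i ⟨t.1, by have := t.2; omega⟩ * S j ⟨n + t.1, by have := t.2; omega⟩ -
            S i ⟨n + t.1, by have := t.2; omega⟩ * S j ⟨t.1, by have := t.2; omega⟩) +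
          (if t = ⟨i.1, lt_of_lt_of_le i.2 hrn⟩ then
            (if i.1 < j.1 then sympl n (S j) (S i) else 0) else 0) -
          (if t = ⟨j.1, lt_of_lt_of_le j.2 hrn⟩ then
            (if j.1 < i.1 then sympl n (S i) (S j) else 0) else 0) := by
        intro t
        rw [hlow i t, hlow j t, hhigh i t, hhigh j t, ← keyL i j t, ← keyL j i t]
        ring
      rw [Finset.sum_congr rfl fun t _ => step t]
      rw [Finset.sum_sub_distrib, Finset.sum_add_distrib,
        Finset.sum_ite_eq' Finset.univ (⟨i.1, lt_of_lt_of_le i.2 hrn⟩ : Fin n),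
        Finset.sum_ite_eq' Finset.univ (⟨j.1, lt_of_lt_of_le j.2 hrn⟩ : Fin n)]
      simp [sympl]
    rw [expand]
    rcases lt_trichotomy i.1 j.1 with h | h | h
    · rw [if_pos h, if_neg (by omega), sympl_antisymm n (S j) (S i)]
      ring
    · have : i = j := Fin.ext h
      subst this
      have h0 : sympl n (S i) (S i) = 0 := by
        have := sympl_antisymm n (S i) (S i); omega
      simp [h0]
    · rw [if_neg (by omega), if_pos h]
      ring
  · intro q hq i c
    rw [hS']
    simp only
    have hd : (q : ℤ) ∣ (if h : n ≤ c.1 ∧ c.1 - n < r ∧ c.1 - n < i.1 then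
        sympl n (S i) (S ⟨c.1 - n, h.2.1⟩) else 0) := by
      split
      · exact hq _ _
      · exact dvd_zero _
    have : S i c - (S i c + (if h : n ≤ c.1 ∧ c.1 - n < r ∧ c.1 - n < i.1 then
        sympl n (S i) (S ⟨c.1 - n, h.2.1⟩) else 0)) =
        -(if h : n ≤ c.1 ∧ c.1 - n < r ∧ c.1 - n < i.1 then
        sympl n (S i) (S ⟨c.1 - n, h.2.1⟩) else 0) := by ring
    exact Int.ModEq.symm (Int.modEq_iff_dvd.2 (by rw [this]; exact dvd_neg.2 hd)) |>.symm
end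

section
/- Let q n : ℕ with q ≥ 1. For all a b c d : Fin n → ZMod q, the generalized Pauli matrices satisfy P(a,b) * P(c,d) = ω_q ^ ((Σ_t b t * c t − Σ_t a t * d t).val) • (P(c,d) * P(a,b)), where the exponent is the canonical representative in {0,…,q−1} of the ZMod q element Σ_t b t * c t − Σ_t a t * d t. -/
open scoped Matrix

/-- The generalized Pauli operator `X^a Z^b` on `n` qudits of local dimension `q`:
`(X^a Z^b) |j⟩ = ω_q^{b·j} |j + a⟩` with `ω_q = exp(2πi/q)`. -/
noncomputable def pauli (q n : ℕ) (a b : Fin n → ZMod q) :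
    Matrix (Fin n → ZMod q) (Fin n → ZMod q) ℂ := fun j' j =>
  if j' = j + a then
    Complex.exp (2 * Real.pi * Complex.I / q) ^ ((∑ t, b t * j t).val) else 0

private lemma omega_pow_q (q : ℕ) [NeZero q] :
    Complex.exp (2 * Real.pi * Complex.I / q) ^ q = 1 := by
  have hq0 : (q : ℂ) ≠ 0 := Nat.cast_ne_zero.mpr (NeZero.ne q)
  rw [← Complex.exp_nat_mul]
  have h : (q : ℂ) * (2 * Real.pi * Complex.I / q) = 2 * Real.pi * Complex.I := by
    field_simp
  rw [h, Complex.exp_two_pi_mul_I]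

private lemma omega_pow_add (q : ℕ) [NeZero q] (x y : ZMod q) :
    Complex.exp (2 * Real.pi * Complex.I / q) ^ (x + y).val =
      Complex.exp (2 * Real.pi * Complex.I / q) ^ x.val *
        Complex.exp (2 * Real.pi * Complex.I / q) ^ y.val := by
  rw [← pow_add, ZMod.val_add]
  conv_rhs => rw [← Nat.mod_add_div (x.val + y.val) q]
  rw [pow_add, pow_mul, omega_pow_q, one_pow, mul_one]

/-- Commutation phase relation for generalized Pauli operators:
`P(a,b) P(c,d) = ω_q^{(b·c − a·d)} P(c,d) P(a,b)`. -/
theorem pauli_comm_phase (q n : ℕ) [NeZero q] (hq : 1 ≤ q)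
    (a b c d : Fin n → ZMod q) :
    pauli q n a b * pauli q n c d =
      Complex.exp (2 * Real.pi * Complex.I / q) ^
          ((∑ t, b t * c t - ∑ t, a t * d t).val) •
        (pauli q n c d * pauli q n a b) := by
  ext j' j
  simp only [Matrix.mul_apply, Matrix.smul_apply, pauli, smul_eq_mul]
  rw [Finset.sum_eq_single (j + c) (fun k _ hk => by
        rw [if_neg hk, mul_zero])
      (fun h => absurd (Finset.mem_univ _) h),
    Finset.sum_eq_single (j + a) (fun k _ hk => by
        rw [if_neg hk, mul_zero])
      (fun h => absurd (Finset.mem_univ _) h)]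
  rw [if_pos rfl, if_pos rfl]
  by_cases h : j' = j + c + a
  · rw [if_pos h, if_pos (by rw [h]; abel)]
    rw [← omega_pow_add, ← omega_pow_add, ← omega_pow_add]
    congr 2
    simp only [Pi.add_apply, mul_add, Finset.sum_add_distrib]
    have hda : ∑ t, d t * a t = ∑ t, a t * d t :=
      Finset.sum_congr rfl fun t _ => mul_comm _ _
    rw [hda]; ring
  · rw [if_neg h, if_neg (fun h' => h (by rw [h']; abel))]
    simp
end

section
/- Let q n : ℕ with q ≥ 1. For all a b c d : Fin n → ZMod q, the matrices P(a,b) and P(c,d) commute, i.e. P(a,b) * P(c,d) = P(c,d) * P(a,b), if and only if Σ_t (a t * d t − b t * c t) = 0 in ZMod q. -/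
open scoped Matrix

/-- Two generalized Pauli operators commute iff the symplectic product of their
`φ_q` representations vanishes in `ZMod q`. -/
theorem pauli_commute_iff_sympl_eq_zero (q n : ℕ) [NeZero q] (hq : 1 ≤ q)
    (a b c d : Fin n → ZMod q) :
    pauli q n a b * pauli q n c d = pauli q n c d * pauli q n a b ↔
      ∑ t, (a t * d t - b t * c t) = 0 := by
  set ζ : ℂ := Complex.exp (2 * Real.pi * Complex.I / q) with hζdef
  have hprim : IsPrimitiveRoot ζ q := Complex.isPrimitiveRoot_exp q (NeZero.ne q)
  have hζq : ζ ^ q = 1 := hprim.pow_eq_one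
  have hmod : ∀ m : ℕ, ζ ^ (m % q) = ζ ^ m := by
    intro m
    conv_rhs => rw [← Nat.mod_add_div m q]
    rw [pow_add, pow_mul, hζq, one_pow, mul_one]
  have hpow : ∀ x y : ZMod q, ζ ^ (x + y).val = ζ ^ x.val * ζ ^ y.val := by
    intro x y
    rw [ZMod.val_add, hmod, pow_add]
  have hentry : ∀ (a b c d : Fin n → ZMod q) (j' j : Fin n → ZMod q),
      (pauli q n a b * pauli q n c d) j' j =
        if j' = j + c + a then
          ζ ^ (∑ t, b t * (j + c) t).val * ζ ^ (∑ t, d t * j t).val else 0 := by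
    intro a b c d j' j
    rw [Matrix.mul_apply]
    rw [Finset.sum_eq_single (j + c)]
    · simp only [pauli, eq_self_iff_true, if_true]
      by_cases h : j' = j + c + a
      · rw [if_pos h, if_pos h]
      · rw [if_neg h, if_neg h, zero_mul]
    · intro k _ hk
      simp only [pauli, if_neg hk, mul_zero]
    · intro h; exact absurd (Finset.mem_univ _) h
  constructor
  · intro h
    have h0 := congrFun (congrFun h (0 + c + a)) 0
    rw [hentry a b c d, hentry c d a b] at h0
    rw [if_pos rfl, if_pos (add_right_comm 0 c a)] at h0
    simp only [zero_add, Pi.zero_apply, mul_zero, Finset.sum_const_zero,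
      ZMod.val_zero, pow_zero, mul_one] at h0
    have hval := hprim.pow_inj (ZMod.val_lt _) (ZMod.val_lt _) h0
    have heq : (∑ t, b t * c t) = ∑ t, d t * a t := ZMod.val_injective q hval
    rw [Finset.sum_sub_distrib, sub_eq_zero, heq]
    exact Finset.sum_congr rfl fun t _ => mul_comm _ _
  · intro h
    rw [Finset.sum_sub_distrib, sub_eq_zero] at h
    have h' : (∑ t, b t * c t) = ∑ t, d t * a t := by
      rw [← h]; exact Finset.sum_congr rfl fun t _ => mul_comm _ _
    ext j' j
    rw [hentry a b c d, hentry c d a b]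
    by_cases hc : j' = j + c + a
    · rw [if_pos hc, if_pos (hc.trans (add_right_comm j c a)), ← hpow, ← hpow]
      congr 1
      have hX : (∑ t, b t * (j + c) t) + ∑ t, d t * j t =
          (∑ t, d t * (j + a) t) + ∑ t, b t * j t := by
        simp only [Pi.add_apply, mul_add, Finset.sum_add_distrib]
        rw [h']; ring
      rw [hX]
    · rw [if_neg hc, if_neg fun hh => hc (hh.trans (add_right_comm j a c))]
end

section
/- Let r N d B : ℕ with d ≥ 1 and B ≥ 1, and let A : Matrix (Fin r) (Fin N) ℤ satisfy |A i j| ≤ B for all i j. Let p be a prime with (p : ℤ) > B^(2*(d−1)) * (2*(d−1))^(d−1), and let A_p = A.map (Int.cast : ℤ → ZMod p). Suppose v : Fin N → ZMod p is nonzero, the support {j | v j ≠ 0} has cardinality at most 2*(d−1), and A_p.mulVec v = 0. Then there exists a nonzero w : Fin N → ℤ with {j | w j ≠ 0} ⊆ {j | v j ≠ 0} and A.mulVec w = 0. -/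
open Finset Matrix

private lemma hadamard_col' {n : ℕ} (M : Matrix (Fin n) (Fin n) ℝ) :
    |M.det| ≤ ∏ j : Fin n, Real.sqrt (∑ i : Fin n, (M i j)^2) := by
  have h : Module.finrank ℝ (EuclideanSpace ℝ (Fin n)) = Fintype.card (Fin n) := by simp
  set f : Fin n → EuclideanSpace ℝ (Fin n) := fun j => (WithLp.equiv 2 (Fin n → ℝ)).symm (fun i => M i j) with hf
  set b : OrthonormalBasis (Fin n) ℝ (EuclideanSpace ℝ (Fin n)) := @InnerProductSpace.gramSchmidtOrthonormalBasis ℝ _ _ _ _ (Fin n) _ _ (inferInstanceAs (WellFoundedLT (Fin n))) _ _ h f with hb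
  have key : b.toBasis.det f = ∏ i, (inner ℝ (b i) (f i) : ℝ) := @InnerProductSpace.gramSchmidtOrthonormalBasis_det ℝ _ _ _ _ (Fin n) _ _ (inferInstanceAs (WellFoundedLT (Fin n))) _ _ h f _
  set std := EuclideanSpace.basisFun (Fin n) ℝ with hstd
  have hM : std.toBasis.toMatrix f = M := by
    ext i j
    simp [Module.Basis.toMatrix, hf, hstd]
  have hdet1 : b.toBasis.det ⇑std.toBasis = 1 ∨ b.toBasis.det ⇑std.toBasis = -1 :=
    b.det_to_matrix_orthonormalBasis_real std
  have hsplit : b.toBasis.det f = b.toBasis.det ⇑std.toBasis * M.det := by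
    rw [Module.Basis.det_apply, Module.Basis.det_apply, ← hM, ← Matrix.det_mul,
      Module.Basis.toMatrix_mul_toMatrix]
  have habs : |M.det| = |b.toBasis.det f| := by
    rcases hdet1 with h1 | h1 <;> rw [hsplit, h1] <;> simp
  rw [habs, key, Finset.abs_prod]
  apply Finset.prod_le_prod (fun i _ => abs_nonneg _)
  intro i _
  have h2 := abs_real_inner_le_norm (b i) (f i)
  have hbi : ‖b i‖ = 1 := b.orthonormal.1 i
  rw [hbi, one_mul] at h2
  refine h2.trans (le_of_eq ?_)
  rw [EuclideanSpace.norm_eq]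
  congr 1
  apply Finset.sum_congr rfl
  intro k _
  rw [Real.norm_eq_abs, sq_abs]
  rfl

private lemma row_select {r : ℕ} {ι : Type*} [Fintype ι] [DecidableEq ι]
    (Mq : Matrix (Fin r) ι ℚ)
    (hinj : ∀ c : ι → ℚ, Mq.mulVec c = 0 → c = 0) :
    ∃ τ : ι → Fin r, ((Mq.submatrix τ id).det ≠ 0) := by
  classical
  have hker : LinearMap.ker Mq.mulVecLin = ⊥ := by
    rw [LinearMap.ker_eq_bot']
    intro c hc
    exact hinj c hc
  have hrank : Mq.rank = Fintype.card ι := by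
    rw [Matrix.rank, LinearMap.finrank_range_of_inj (LinearMap.ker_eq_bot.mp hker)]
    simp [Module.finrank_fintype_fun_eq_card]
  have hrankT : Mqᵀ.rank = Fintype.card ι := by
    rw [Matrix.rank_transpose, hrank]
  have hsurj : LinearMap.range (Mqᵀ.mulVecLin) = ⊤ := by
    apply Submodule.eq_top_of_finrank_eq
    rw [← Matrix.rank, hrankT, Module.finrank_fintype_fun_eq_card]
  have hspan : Submodule.span ℚ (Set.range Mq) = ⊤ := by
    have h2 := Matrix.range_mulVecLin Mqᵀ
    rw [Matrix.col, Matrix.transpose_transpose] at h2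
    rw [← h2, hsurj]
  obtain ⟨bset, hbsub, hbspan, hbind⟩ := exists_linearIndependent ℚ (Set.range Mq)
  rw [hspan] at hbspan
  have hbfin : bset.Finite := (Set.finite_range Mq).subset hbsub
  have : Fintype bset := hbfin.fintype
  let Bas : Module.Basis bset ℚ (ι → ℚ) := Module.Basis.mk hbind (by rw [Subtype.range_coe, hbspan])
  have hcard : Fintype.card bset = Fintype.card ι := by
    rw [← Module.finrank_eq_card_basis Bas, Module.finrank_fintype_fun_eq_card]
  let e : ι ≃ bset := (Fintype.equivOfCardEq hcard).symm
  have hτ : ∀ x : bset, ∃ i : Fin r, Mq i = (x : ι → ℚ) := fun x => hbsub x.2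
  choose τ0 hτ0 using hτ
  refine ⟨fun a => τ0 (e a), ?_⟩
  intro hdet
  have hdetT : (Mq.submatrix (fun a => τ0 (e a)) id)ᵀ.det = 0 := by
    rw [Matrix.det_transpose]; exact hdet
  obtain ⟨c, hc0, hcv⟩ := (Matrix.exists_mulVec_eq_zero_iff).mpr hdetT
  have hrows : LinearIndependent ℚ (fun a : ι => (Mq (τ0 (e a)) : ι → ℚ)) := by
    have h3 : (fun a : ι => (Mq (τ0 (e a)) : ι → ℚ))
        = (fun x : bset => (x : ι → ℚ)) ∘ e := by
      funext a; simp [hτ0]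
    rw [h3]
    exact hbind.comp e e.injective
  have hsum : ∑ a, c a • (Mq (τ0 (e a)) : ι → ℚ) = 0 := by
    funext j
    have h4 := congrFun hcv j
    simpa [Matrix.mulVec, dotProduct, Finset.sum_apply, mul_comm] using h4
  exact hc0 (funext (Fintype.linearIndependent_iff.mp hrows c hsum))

/-- Kernel core of the paper's Theorem 3 (distance promise): for a prime `p` above
the cutoff `p* = B^{2(d−1)} (2(d−1))^{(d−1)}`, every nonzero vector of support size
at most `2(d−1)` annihilated by the mod-`p` reduction of `A` arises from a nonzero
integer vector supported inside the same set and annihilated by `A` over `ℤ`. -/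
theorem undetectable_error_is_unavoidable (r N d B : ℕ) (hd : 1 ≤ d) (hB : 1 ≤ B)
    (A : Matrix (Fin r) (Fin N) ℤ)
    (hAB : ∀ i j, |A i j| ≤ (B : ℤ))
    (p : ℕ) (hp : p.Prime)
    (hcut : (p : ℤ) > (B : ℤ) ^ (2 * (d - 1)) * ((2 * (d - 1) : ℕ) : ℤ) ^ (d - 1))
    (v : Fin N → ZMod p) (hv : v ≠ 0)
    (hsupp : {j | v j ≠ 0}.ncard ≤ 2 * (d - 1))
    (hker : (A.map (Int.cast : ℤ → ZMod p)).mulVec v = 0) :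
    ∃ w : Fin N → ℤ, w ≠ 0 ∧ {j | w j ≠ 0} ⊆ {j | v j ≠ 0} ∧ A.mulVec w = 0 := by
  classical
  haveI : Fact p.Prime := ⟨hp⟩
  have hfin : {j | v j ≠ 0}.Finite := Set.toFinite _
  set S : Finset (Fin N) := hfin.toFinset with hSdef
  have hmemS : ∀ j, j ∈ S ↔ v j ≠ 0 := fun j => hfin.mem_toFinset
  set k := 2 * (d - 1) with hk
  have hScard : S.card ≤ k := by
    rwa [Set.ncard_eq_toFinset_card _ hfin] at hsupp
  -- S is nonempty
  obtain ⟨j0, hj0⟩ : ∃ j, v j ≠ 0 := by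
    by_contra h
    push_neg at h
    exact hv (funext h)
  have hj0S : j0 ∈ S := (hmemS j0).mpr hj0
  by_cases hdep : ∃ c : {x // x ∈ S} → ℚ, c ≠ 0 ∧
      ∀ i, ∑ j : {x // x ∈ S}, ((A i j.1 : ℚ)) * c j = 0
  · -- Case 1: rational dependency among the columns in S; clear denominators.
    obtain ⟨c, hc0, hcA⟩ := hdep
    obtain ⟨b, hb⟩ := IsLocalization.exist_integer_multiples (nonZeroDivisors ℤ)
      (Finset.univ : Finset {x // x ∈ S}) c
    choose nf hnf using fun j : {x // x ∈ S} => hb j (Finset.mem_univ j)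
    set w : Fin N → ℤ := fun j => if h : j ∈ S then nf ⟨j, h⟩ else 0 with hw
    have hwc : ∀ j : {x // x ∈ S}, ((w j.1 : ℚ)) = (b : ℤ) * c j := by
      intro j
      have := hnf j
      simp only [Algebra.smul_def, algebraMap_int_eq, eq_intCast] at this
      rw [hw]
      simp only [j.2, dif_pos]
      rw [this]
    have hbne : ((b : ℤ) : ℚ) ≠ 0 := by
      have := nonZeroDivisors.coe_ne_zero b
      exact_mod_cast this
    refine ⟨w, ?_, ?_, ?_⟩
    · -- nonzero
      obtain ⟨j1, hj1⟩ : ∃ j1, c j1 ≠ 0 := by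
        by_contra h; push_neg at h; exact hc0 (funext h)
      intro h0
      apply hj1
      have : ((w j1.1 : ℚ)) = 0 := by rw [h0]; simp
      rw [hwc j1] at this
      rcases mul_eq_zero.mp this with h | h
      · exact absurd h hbne
      · exact h
    · -- support
      intro j hj
      have : j ∈ S := by
        by_contra hns
        apply hj
        rw [hw]
        simp [hns]
      exact (hmemS j).mp this
    · -- kernel
      funext i
      have hQ : ∑ j : Fin N, ((A i j : ℚ)) * ((w j : ℚ)) = 0 := by
        have hsub : ∑ j ∈ S, ((A i j : ℚ)) * ((w j : ℚ))
            = ∑ j : Fin N, ((A i j : ℚ)) * ((w j : ℚ)) := by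
          apply Finset.sum_subset (Finset.subset_univ S)
          intro x _ hx
          rw [hw]
          simp [hx]
        rw [← hsub, ← Finset.sum_coe_sort S]
        have : ∀ j : {x // x ∈ S}, ((A i j.1 : ℚ)) * ((w j.1 : ℚ))
            = ((b : ℤ) : ℚ) * (((A i j.1 : ℚ)) * c j) := by
          intro j; rw [hwc j]; ring
        rw [Finset.sum_congr rfl (fun j _ => this j), ← Finset.mul_sum, hcA i, mul_zero]
      have : ((A.mulVec w i : ℤ) : ℚ) = 0 := by
        rw [Matrix.mulVec, dotProduct]
        push_cast
        exact hQ
      exact_mod_cast this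
  · -- Case 2: columns on S are ℚ-independent; derive a contradiction.
    exfalso
    push_neg at hdep
    set Mq : Matrix (Fin r) {x // x ∈ S} ℚ := fun i j => ((A i j.1 : ℚ)) with hMq
    have hinj : ∀ c : {x // x ∈ S} → ℚ, Mq.mulVec c = 0 → c = 0 := by
      intro c hc
      by_contra hc0
      obtain ⟨i, hi⟩ := hdep c hc0
      apply hi
      have h5 := congrFun hc i
      simpa [Matrix.mulVec, dotProduct, hMq] using h5
    obtain ⟨τ, hτdet⟩ := row_select Mq hinj
    set Z : Matrix {x // x ∈ S} {x // x ∈ S} ℤ := fun a j => A (τ a) j.1 with hZ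
    have hZQ : Z.map ((Int.cast : ℤ → ℚ)) = Mq.submatrix τ id := by
      ext a j; simp [hZ, hMq]; rfl
    have hdetZ : Z.det ≠ 0 := by
      intro h0
      apply hτdet
      rw [← hZQ]
      have h6 := RingHom.map_det (Int.castRingHom ℚ) Z
      rw [RingHom.mapMatrix_apply] at h6
      simp only [Int.coe_castRingHom, eq_intCast] at h6
      rw [← h6, h0]
      simp
    -- p divides det Z
    have hvS : (fun j : {x // x ∈ S} => v j.1) ≠ 0 := by
      intro h0
      exact hj0 (congrFun h0 ⟨j0, hj0S⟩)
    have hZpv : (Z.map (Int.cast : ℤ → ZMod p)).mulVec (fun j : {x // x ∈ S} => v j.1) = 0 := by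
      funext a
      have h1 : ((A.map (Int.cast : ℤ → ZMod p)).mulVec v) (τ a) = 0 := congrFun hker (τ a)
      simp only [Matrix.mulVec, dotProduct, Matrix.map_apply, Pi.zero_apply] at h1 ⊢
      rw [← h1]
      have e1 : ∑ x : {x // x ∈ S}, ((A (τ a) x.1 : ZMod p)) * v x.1
          = ∑ x ∈ S, ((A (τ a) x : ZMod p)) * v x := Finset.sum_coe_sort S (fun j => ((A (τ a) j : ZMod p)) * v j)
      refine e1.trans ?_
      apply Finset.sum_subset (Finset.subset_univ S)
      intro x _ hx
      have hvx : v x = 0 := by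
        by_contra h
        exact hx ((hmemS x).mpr h)
      simp [hvx]
    have hdetZp : ((Z.det : ℤ) : ZMod p) = 0 := by
      have h2 : (Z.map (Int.cast : ℤ → ZMod p)).det = 0 :=
        Matrix.exists_mulVec_eq_zero_iff.mp ⟨_, hvS, hZpv⟩
      have h6 := RingHom.map_det (Int.castRingHom (ZMod p)) Z
      rw [RingHom.mapMatrix_apply] at h6
      simp only [Int.coe_castRingHom, eq_intCast] at h6
      rw [← h6] at h2
      simpa using h2
    have hpdvd : (p : ℤ) ∣ Z.det := by
      rwa [ZMod.intCast_zmod_eq_zero_iff_dvd] at hdetZp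
    have hple : (p : ℤ) ≤ |Z.det| :=
      Int.le_of_dvd (abs_pos.mpr hdetZ) ((dvd_abs _ _).mpr hpdvd)
    -- Hadamard bound
    set n' := Fintype.card {x // x ∈ S} with hn'
    have hn'card : n' = S.card := Fintype.card_coe S
    have hn'le : n' ≤ k := hn'card ▸ hScard
    have hn'pos : 1 ≤ n' := by
      rw [hn'card]
      exact Finset.card_pos.mpr ⟨j0, hj0S⟩
    let e' : {x // x ∈ S} ≃ Fin n' := Fintype.equivFin _
    set M' : Matrix (Fin n') (Fin n') ℝ :=
      (Z.submatrix e'.symm e'.symm).map (Int.cast : ℤ → ℝ) with hM'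
    have hdetM' : |M'.det| = |(Z.det : ℝ)| := by
      have h6 := RingHom.map_det (Int.castRingHom ℝ) (Z.submatrix e'.symm e'.symm)
      rw [RingHom.mapMatrix_apply] at h6
      simp only [Int.coe_castRingHom, eq_intCast] at h6
      rw [hM', ← h6, Matrix.det_submatrix_equiv_self]
    have hent : ∀ a j, |M' a j| ≤ (B : ℝ) := by
      intro a j
      rw [hM']
      simp only [Matrix.map_apply, Matrix.submatrix_apply]
      rw [← Int.cast_abs]
      exact_mod_cast hAB _ _
    have hcolbound : ∀ j, Real.sqrt (∑ i : Fin n', (M' i j)^2)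
        ≤ Real.sqrt ((n' : ℝ) * (B : ℝ)^2) := by
      intro j
      apply Real.sqrt_le_sqrt
      calc ∑ i : Fin n', (M' i j)^2 ≤ ∑ _i : Fin n', (B : ℝ)^2 := by
            apply Finset.sum_le_sum
            intro i _
            rw [← sq_abs]
            apply pow_le_pow_left₀ (abs_nonneg _) (hent i j)
        _ = (n' : ℝ) * (B : ℝ)^2 := by
            rw [Finset.sum_const, Finset.card_univ, Fintype.card_fin, nsmul_eq_mul]
    have hhad : |M'.det| ≤ Real.sqrt ((n' : ℝ) * (B : ℝ)^2) ^ n' := by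
      refine (hadamard_col' M').trans ?_
      calc ∏ j : Fin n', Real.sqrt (∑ i : Fin n', (M' i j)^2)
          ≤ ∏ _j : Fin n', Real.sqrt ((n' : ℝ) * (B : ℝ)^2) :=
            Finset.prod_le_prod (fun j _ => Real.sqrt_nonneg _) (fun j _ => hcolbound j)
        _ = Real.sqrt ((n' : ℝ) * (B : ℝ)^2) ^ n' := by
            rw [Finset.prod_const, Finset.card_univ, Fintype.card_fin]
    have hkpos : 1 ≤ k := le_trans hn'pos hn'le
    have h1le : (1 : ℝ) ≤ (n' : ℝ) * (B : ℝ)^2 := by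
      have hb1 : (1 : ℝ) ≤ (B : ℝ) := by exact_mod_cast hB
      have hn1 : (1 : ℝ) ≤ (n' : ℝ) := by exact_mod_cast hn'pos
      nlinarith
    have hstep : Real.sqrt ((n' : ℝ) * (B : ℝ)^2) ^ n'
        ≤ Real.sqrt ((k : ℝ) * (B : ℝ)^2) ^ k := by
      have hbase : Real.sqrt ((n' : ℝ) * (B : ℝ)^2) ≤ Real.sqrt ((k : ℝ) * (B : ℝ)^2) := by
        apply Real.sqrt_le_sqrt
        have : (n' : ℝ) ≤ (k : ℝ) := by exact_mod_cast hn'le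
        nlinarith [sq_nonneg (B : ℝ)]
      have h1base : (1 : ℝ) ≤ Real.sqrt ((n' : ℝ) * (B : ℝ)^2) :=
        Real.one_le_sqrt.mpr h1le
      calc Real.sqrt ((n' : ℝ) * (B : ℝ)^2) ^ n'
          ≤ Real.sqrt ((n' : ℝ) * (B : ℝ)^2) ^ k := pow_le_pow_right₀ h1base hn'le
        _ ≤ Real.sqrt ((k : ℝ) * (B : ℝ)^2) ^ k :=
            pow_le_pow_left₀ (le_trans zero_le_one h1base) hbase k
    have hfinal : Real.sqrt ((k : ℝ) * (B : ℝ)^2) ^ k = (B : ℝ)^k * (k : ℝ)^(d-1) := by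
      rw [Real.sqrt_mul (by positivity : (0:ℝ) ≤ (k:ℝ)), Real.sqrt_sq (by positivity : (0:ℝ) ≤ (B:ℝ))]
      rw [mul_pow, mul_comm]
      congr 1
      rw [hk, pow_mul]
      rw [Real.sq_sqrt (by positivity : (0:ℝ) ≤ ((2*(d-1) : ℕ) : ℝ))]
    have hcutR : (B : ℝ)^k * (k : ℝ)^(d-1) < (p : ℝ) := by
      have := hcut
      rw [gt_iff_lt] at this
      exact_mod_cast this
    have hcontra : (p : ℝ) ≤ (B : ℝ)^k * (k : ℝ)^(d-1) := by
      calc (p : ℝ) ≤ |(Z.det : ℝ)| := by exact_mod_cast hple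
        _ = |M'.det| := hdetM'.symm
        _ ≤ Real.sqrt ((n' : ℝ) * (B : ℝ)^2) ^ n' := hhad
        _ ≤ Real.sqrt ((k : ℝ) * (B : ℝ)^2) ^ k := hstep
        _ = (B : ℝ)^k * (k : ℝ)^(d-1) := hfinal
    linarith
end

section
/- Let A : Matrix (Fin r) (Fin N) ℤ and let A_ℝ = A.map (Int.cast : ℤ → ℝ). Suppose v : Fin N → ℝ is nonzero and A_ℝ.mulVec v = 0. Then there exists a nonzero w : Fin N → ℤ with {j | w j ≠ 0} ⊆ {j | v j ≠ 0} and A.mulVec w = 0. -/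
open Matrix

/-- Summing over the subtype of a predicate agrees with summing over everything,
provided the function vanishes off the predicate. -/
lemma sum_subtype_of_support {M : Type*} [AddCommMonoid M] {n : ℕ}
    (p : Fin n → Prop) [DecidablePred p] (g : Fin n → M)
    (hg : ∀ j, ¬ p j → g j = 0) : ∑ j : Subtype p, g j.1 = ∑ j, g j := by
  rw [← Finset.sum_subtype (Finset.univ.filter p) (by simp) g]
  exact Finset.sum_filter_of_ne fun x _ h => by
    by_contra hp; exact h (hg x hp)

/-- Core of the paper's CV analog theorem: over the reals no artifact errors can be
introduced — every nonzero real vector annihilated by the real reduction of the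
integer matrix `A` arises from a nonzero integer vector supported inside the same
set and annihilated by `A` over `ℤ`. -/
theorem cv_undetectable_error_is_unavoidable (r N : ℕ)
    (A : Matrix (Fin r) (Fin N) ℤ)
    (v : Fin N → ℝ) (hv : v ≠ 0)
    (hker : (A.map (Int.cast : ℤ → ℝ)).mulVec v = 0) :
    ∃ w : Fin N → ℤ, w ≠ 0 ∧ {j | w j ≠ 0} ⊆ {j | v j ≠ 0} ∧ A.mulVec w = 0 := by
  classical
  -- restrict columns to the support of v
  set S := {j : Fin N // v j ≠ 0}
  set B : Matrix (Fin r) S ℤ := A.submatrix id Subtype.val with hB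
  set vS : S → ℝ := fun j => v j.1 with hvS
  have hvS0 : vS ≠ 0 := by
    obtain ⟨j, hj⟩ := Function.ne_iff.mp hv
    exact Function.ne_iff.mpr ⟨⟨j, hj⟩, hj⟩
  -- the restricted real matrix annihilates vS
  have hBk : (B.map (Int.cast : ℤ → ℝ)).mulVec vS = 0 := by
    funext i
    have h0 := congrFun hker i
    simp only [Matrix.mulVec, dotProduct, Pi.zero_apply] at h0 ⊢
    exact (sum_subtype_of_support (fun j => v j ≠ 0)
      (fun j => (A.map (Int.cast : ℤ → ℝ)) i j * v j)
      (fun j hj => by simp only [not_not] at hj; simp [hj])).trans h0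
  -- Gram matrix
  set M : Matrix S S ℤ := Bᵀ * B with hM
  have hMreal : (M.map (Int.cast : ℤ → ℝ)).mulVec vS = 0 := by
    have hmap : M.map (Int.cast : ℤ → ℝ)
        = (B.map (Int.cast : ℤ → ℝ))ᵀ * (B.map (Int.cast : ℤ → ℝ)) := by
      rw [hM]
      ext i j
      simp only [Matrix.map_apply, Matrix.mul_apply, Matrix.transpose_apply]
      push_cast
      rfl
    rw [hmap, ← Matrix.mulVec_mulVec, hBk, Matrix.mulVec_zero]
  -- det M = 0 over ℝ, hence over ℤ
  have hdetR : (M.map (Int.cast : ℤ → ℝ)).det = 0 := by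
    rw [← Matrix.exists_mulVec_eq_zero_iff]
    exact ⟨vS, hvS0, hMreal⟩
  have hdet : M.det = 0 := by
    have h2 : ((M.det : ℤ) : ℝ) = (M.map (Int.cast : ℤ → ℝ)).det := by
      simpa [RingHom.mapMatrix_apply] using (Int.castRingHom ℝ).map_det M
    rw [hdetR] at h2
    exact_mod_cast h2
  -- integer kernel vector of M
  obtain ⟨w0, hw0, hMw0⟩ := (Matrix.exists_mulVec_eq_zero_iff).mpr hdet
  -- B *ᵥ w0 = 0 via sum of squares
  have hBw0 : B.mulVec w0 = 0 := by
    have h : w0 ⬝ᵥ (M.mulVec w0) = 0 := by rw [hMw0, dotProduct_zero]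
    rw [hM, ← Matrix.mulVec_mulVec, Matrix.dotProduct_mulVec,
      Matrix.vecMul_transpose, dotProduct_self_eq_zero] at h
    exact h
  -- extend w0 by zero
  refine ⟨fun j => if h : v j ≠ 0 then w0 ⟨j, h⟩ else 0, ?_, ?_, ?_⟩
  · obtain ⟨j, hj⟩ := Function.ne_iff.mp hw0
    refine Function.ne_iff.mpr ⟨j.1, ?_⟩
    simpa [j.2] using hj
  · intro j hj
    simp only [Set.mem_setOf_eq] at hj ⊢
    by_contra h
    exact hj (by simp [h])
  · funext i
    have h0 := congrFun hBw0 i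
    simp only [Matrix.mulVec, dotProduct, Pi.zero_apply] at h0 ⊢
    calc ∑ x : Fin N, A i x * (if h : v x ≠ 0 then w0 ⟨x, h⟩ else 0)
        = ∑ x : S, A i x.1 * (if h : v x.1 ≠ 0 then w0 ⟨x.1, h⟩ else 0) :=
          (sum_subtype_of_support (fun j => v j ≠ 0)
            (fun j => A i j * (if h : v j ≠ 0 then w0 ⟨j, h⟩ else 0))
            (fun j hj => by simp [not_not.mp hj])).symm
      _ = ∑ x : S, B i x * w0 x := by
          apply Finset.sum_congr rfl
          intro j _
          simp [j.2, hB]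
      _ = 0 := h0
end

section
/- Let r N d B : ℕ with d ≥ 1 and B ≥ 1, and let A : Matrix (Fin r) (Fin N) ℤ satisfy |A i j| ≤ B for all i j. Let R be a commutative ring which is an integral domain, and suppose R has characteristic c (CharP R c) where either c = 0 or (c : ℤ) > B^(2*(d−1)) * (2*(d−1))^(d−1). Let A_R = A.map (Int.cast : ℤ → R). Suppose v : Fin N → R is nonzero, the support {j | v j ≠ 0} has cardinality at most 2*(d−1), and A_R.mulVec v = 0. Then there exists a nonzero w : Fin N → ℤ with {j | w j ≠ 0} ⊆ {j | v j ≠ 0} and A.mulVec w = 0. -/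
open Matrix Submodule

/-- AM-GM: the product of `n` nonnegative reals is at most `((their sum)/n)^n`. -/
lemma prod_le_div_card_pow {ι : Type*} [Fintype ι] (z : ι → ℝ) (hz : ∀ i, 0 ≤ z i)
    (n : ℕ) (hn : Fintype.card ι = n) (hn0 : 0 < n) :
    ∏ i, z i ≤ ((∑ i, z i) / n) ^ n := by
  have hnR : (0:ℝ) < n := by exact_mod_cast hn0
  have h := Real.geom_mean_le_arith_mean_weighted Finset.univ (fun _ => (n:ℝ)⁻¹) z
    (fun i _ => by positivity)
    (by simp [hn]; field_simp)
    (fun i _ => hz i)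
  have hL : (∏ i, z i ^ ((n:ℝ)⁻¹)) ^ (n:ℕ) = ∏ i, z i := by
    rw [← Finset.prod_pow]
    refine Finset.prod_congr rfl fun i _ => ?_
    rw [← Real.rpow_natCast (z i ^ ((n:ℝ)⁻¹)) n, ← Real.rpow_mul (hz i),
      inv_mul_cancel₀ (ne_of_gt hnR), Real.rpow_one]
  calc ∏ i, z i = (∏ i, z i ^ ((n:ℝ)⁻¹)) ^ (n:ℕ) := hL.symm
    _ ≤ (∑ i, (n:ℝ)⁻¹ * z i) ^ (n:ℕ) :=
        pow_le_pow_left₀ (Finset.prod_nonneg fun i _ => Real.rpow_nonneg (hz i) _) h n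
    _ = ((∑ i, z i) / n) ^ n := by rw [← Finset.mul_sum]; ring

/-- The trace of a real symmetric matrix is the sum of its eigenvalues. -/
lemma trace_eq_sum_eigs {ι : Type*} [Fintype ι] [DecidableEq ι] {G : Matrix ι ι ℝ}
    (hG : G.IsHermitian) : G.trace = ∑ i, hG.eigenvalues i := by
  conv_lhs => rw [hG.spectral_theorem]
  rw [Unitary.conjStarAlgAut_apply, Matrix.trace_mul_cycle]
  rw [show (star (hG.eigenvectorUnitary : Matrix ι ι ℝ)) * (hG.eigenvectorUnitary : Matrix ι ι ℝ)
      = 1 from Unitary.coe_star_mul_self _, one_mul, Matrix.trace_diagonal]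
  simp [RCLike.ofReal]

/-- Hadamard-type bound: for an integer `n × n` matrix with entries bounded by `B`,
`det W ^ 2 ≤ (n * B^2)^n`. -/
lemma det_sq_le {ι : Type*} [Fintype ι] [DecidableEq ι] (W : Matrix ι ι ℤ) (B : ℤ)
    (hW : ∀ i j, |W i j| ≤ B) (n : ℕ) (hn : Fintype.card ι = n) (hn0 : 0 < n) :
    W.det ^ 2 ≤ ((n : ℤ) * B ^ 2) ^ n := by
  have hne : Nonempty ι := Fintype.card_pos_iff.mp (hn ▸ hn0)
  have hB0 : 0 ≤ B := le_trans (abs_nonneg _) (hW (Classical.arbitrary ι) (Classical.arbitrary ι))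
  set Wr : Matrix ι ι ℝ := W.map (Int.cast : ℤ → ℝ) with hWr
  have hpsd : (Wrᴴ * Wr).PosSemidef := Matrix.posSemidef_conjTranspose_mul_self Wr
  set G : Matrix ι ι ℝ := Wrᴴ * Wr with hGdef
  have hG : G.IsHermitian := hpsd.isHermitian
  have hGdiag : ∀ i, G i i ≤ (n : ℝ) * (B:ℝ)^2 := by
    intro i
    rw [hGdef, Matrix.mul_apply]
    calc ∑ k, Wrᴴ i k * Wr k i ≤ ∑ _k : ι, (B:ℝ)^2 := by
          refine Finset.sum_le_sum fun k _ => ?_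
          have : Wrᴴ i k = Wr k i := by simp [Matrix.conjTranspose_apply]
          rw [this, ← sq]
          have h1 : |Wr k i| ≤ (B:ℝ) := by
            have := hW k i
            simp only [hWr, Matrix.map_apply]
            rw [← Int.cast_abs]
            exact_mod_cast this
          calc Wr k i ^ 2 = |Wr k i| ^ 2 := (sq_abs _).symm
            _ ≤ (B:ℝ)^2 := pow_le_pow_left₀ (abs_nonneg _) h1 2
      _ = (n : ℝ) * (B:ℝ)^2 := by
          rw [Finset.sum_const, Finset.card_univ, hn, nsmul_eq_mul]
  have htr : G.trace ≤ (n:ℝ) * ((n : ℝ) * (B:ℝ)^2) := by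
    rw [Matrix.trace]
    calc ∑ i, G.diag i ≤ ∑ _i : ι, (n : ℝ) * (B:ℝ)^2 :=
          Finset.sum_le_sum fun i _ => hGdiag i
      _ = (n:ℝ) * ((n : ℝ) * (B:ℝ)^2) := by
          rw [Finset.sum_const, Finset.card_univ, hn, nsmul_eq_mul]
  have hdet : G.det = ((W.det : ℝ)) ^ 2 := by
    have : Wr.det = ((W.det : ℤ) : ℝ) := by
      rw [hWr]
      exact (RingHom.map_det (Int.castRingHom ℝ) W).symm
    rw [hGdef, Matrix.det_mul, Matrix.det_conjTranspose, this]
    simp [sq]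
  have heig : G.det = ∏ i, hG.eigenvalues i := by
    have := hG.det_eq_prod_eigenvalues
    simpa using this
  have key : G.det ≤ ((n:ℝ) * (B:ℝ)^2)^n := by
    rw [heig]
    calc ∏ i, hG.eigenvalues i ≤ ((∑ i, hG.eigenvalues i) / n)^n :=
          prod_le_div_card_pow _ (fun i => hpsd.eigenvalues_nonneg i) n hn hn0
      _ ≤ ((n:ℝ) * (B:ℝ)^2)^n := by
          refine pow_le_pow_left₀ ?_ ?_ n
          · exact div_nonneg (Finset.sum_nonneg fun i _ => hpsd.eigenvalues_nonneg i)
              (Nat.cast_nonneg n)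
          · rw [div_le_iff₀ (by exact_mod_cast hn0), ← trace_eq_sum_eigs hG]
            calc G.trace ≤ (n:ℝ) * ((n : ℝ) * (B:ℝ)^2) := htr
              _ = (n:ℝ) * (B:ℝ)^2 * n := by ring
  rw [hdet] at key
  exact_mod_cast key

/-- If the columns of an `m × ι` matrix over a field are linearly independent, then there
is a choice of rows giving a square submatrix with nonzero determinant. -/
lemma exists_rows_det_ne_zero {K : Type*} [Field K] {m : ℕ} {ι : Type*} [Fintype ι]
    [DecidableEq ι] (M : Matrix (Fin m) ι K)
    (hM : LinearIndependent K (fun j : ι => Mᵀ j)) :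
    ∃ t : ι → Fin m, (Matrix.of fun i j : ι => M (t i) j).det ≠ 0 := by
  classical
  have hrank : M.rank = Fintype.card ι := by
    rw [Matrix.rank_eq_finrank_span_cols]
    exact finrank_span_eq_card hM
  have hspan : span K (Set.range M) = ⊤ := by
    apply Submodule.eq_top_of_finrank_eq
    have h1 : Mᵀ.rank = Module.finrank K ↥(span K (Set.range M)) := by
      rw [Matrix.rank_eq_finrank_span_cols]; rfl
    rw [← h1, Matrix.rank_transpose, hrank, Module.finrank_pi]
  obtain ⟨b, hbsub, hbspan, hbind⟩ := exists_linearIndependent K (Set.range M)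
  rw [hspan] at hbspan
  have hfin : b.Finite := hbind.setFinite
  haveI : Fintype b := hfin.fintype
  have hbasis : Module.Basis b K (ι → K) := Module.Basis.mk hbind (by rw [Subtype.range_coe, hbspan])
  have hcard : Fintype.card b = Fintype.card ι := by
    rw [← Module.finrank_eq_card_basis hbasis, Module.finrank_pi]
  let e : ι ≃ b := (Fintype.equivOfCardEq hcard).symm
  have hchoice : ∀ x : b, ∃ i : Fin m, M i = (x : ι → K) := fun x => hbsub x.2
  choose t ht using hchoice
  refine ⟨fun i => t (e i), ?_⟩
  intro hdet
  have hdet' : (Matrix.of fun i j : ι => M (t (e i)) j)ᵀ.det = 0 := by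
    rw [Matrix.det_transpose]; exact hdet
  obtain ⟨u, hu, humul⟩ := (Matrix.exists_mulVec_eq_zero_iff).mpr hdet'
  have hind2 : LinearIndependent K (fun i : ι => (e i : ι → K)) :=
    hbind.comp e e.injective
  have hz : ∑ i : ι, u i • ((e i : ι → K)) = 0 := by
    funext j
    have h := congr_fun humul j
    simp only [Matrix.mulVec, dotProduct, Matrix.transpose_apply, Matrix.of_apply,
      Pi.zero_apply] at h
    rw [Finset.sum_apply]
    simp only [Pi.smul_apply, smul_eq_mul]
    rw [show (0 : ι → K) j = 0 from rfl, ← h]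
    refine Finset.sum_congr rfl fun i _ => ?_
    rw [← ht (e i)]
    ring
  have hall : ∀ i, u i = 0 := Fintype.linearIndependent_iff.mp hind2 u hz
  exact hu (funext fun i => hall i)

/-- Distance-preservation core of the paper's 𝓕 ↦ 𝓡 theorem: for an integral
domain `R` whose characteristic is `0` or exceeds the cutoff
`p* = B^{2(d−1)} (2(d−1))^{(d−1)}`, every nonzero vector over `R` of support size
at most `2(d−1)` annihilated by the reduction of `A` to `R` arises from a nonzero
integer vector supported inside the same set and annihilated by `A` over `ℤ`. -/
theorem ring_undetectable_error_is_unavoidable (r N d B : ℕ)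
    (hd : 1 ≤ d) (hB : 1 ≤ B)
    (A : Matrix (Fin r) (Fin N) ℤ)
    (hAB : ∀ i j, |A i j| ≤ (B : ℤ))
    (R : Type*) [CommRing R] [IsDomain R]
    (c : ℕ) [CharP R c]
    (hc : c = 0 ∨
      (c : ℤ) > (B : ℤ) ^ (2 * (d - 1)) * ((2 * (d - 1) : ℕ) : ℤ) ^ (d - 1))
    (v : Fin N → R) (hv : v ≠ 0)
    (hsupp : {j | v j ≠ 0}.ncard ≤ 2 * (d - 1))
    (hker : (A.map (Int.cast : ℤ → R)).mulVec v = 0) :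
    ∃ w : Fin N → ℤ, w ≠ 0 ∧ {j | w j ≠ 0} ⊆ {j | v j ≠ 0} ∧ A.mulVec w = 0 := by
  classical
  by_contra hcon
  push_neg at hcon
  -- hcon : ∀ w, w ≠ 0 → {j | w j ≠ 0} ⊆ {j | v j ≠ 0} → A.mulVec w ≠ 0
  set S : Finset (Fin N) := Finset.univ.filter (fun j => v j ≠ 0) with hS
  have hmemS : ∀ j, j ∈ S ↔ v j ≠ 0 := by intro j; simp [hS]
  have hsetS : {j | v j ≠ 0} = ↑S := by ext j; simp [hmemS]
  have hScard : S.card ≤ 2 * (d - 1) := by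
    rw [hsetS, Set.ncard_coe_finset] at hsupp; exact hsupp
  have hSne : S.Nonempty := by
    obtain ⟨j, hj⟩ := Function.ne_iff.mp hv
    exact ⟨j, (hmemS j).mpr hj⟩
  have hs1 : 1 ≤ S.card := hSne.card_pos
  have hcardS : Fintype.card ↥S = S.card := Fintype.card_coe S
  -- Step A: the columns of `A` indexed by `S` are `ℚ`-linearly independent
  set Mq : Matrix (Fin r) ↥S ℚ := Matrix.of (fun i (j : ↥S) => ((A i j : ℤ) : ℚ)) with hMq
  have hcols : LinearIndependent ℚ (fun j : ↥S => Mqᵀ j) := by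
    rw [Fintype.linearIndependent_iff]
    intro g hg
    obtain ⟨b, hb⟩ := IsLocalization.exist_integer_multiples_of_finite (nonZeroDivisors ℤ) g
    choose gz hgz using hb
    set w : Fin N → ℤ := fun j => if h : j ∈ S then gz ⟨j, h⟩ else 0 with hw
    have hwsupp : {j | w j ≠ 0} ⊆ {j | v j ≠ 0} := by
      intro j hj
      simp only [Set.mem_setOf_eq, hw] at hj ⊢
      by_contra hvj
      have hjS : j ∉ S := fun h => ((hmemS j).mp h) hvj
      simp [hjS] at hj
    have hAw : A.mulVec w = 0 := by
      funext i
      have hrow : ∑ j : ↥S, g j * ((A i (j:Fin N) : ℤ) : ℚ) = 0 := by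
        have h := congr_fun hg i
        rw [Finset.sum_apply] at h
        simpa [hMq, Matrix.transpose_apply] using h
      have hrowz : ∑ j : ↥S, gz j * A i (j:Fin N) = 0 := by
        have hcast : ((∑ j : ↥S, gz j * A i (j:Fin N) : ℤ) : ℚ)
            = ((b:ℤ):ℚ) * ∑ j : ↥S, g j * ((A i (j:Fin N):ℤ):ℚ) := by
          push_cast
          rw [Finset.mul_sum]
          refine Finset.sum_congr rfl fun j _ => ?_
          have := hgz j
          rw [show (algebraMap ℤ ℚ) (gz j) = ((gz j : ℤ):ℚ) from rfl] at this
          rw [this]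
          simp [Algebra.smul_def]
          ring
        rw [hrow, mul_zero] at hcast
        exact_mod_cast hcast
      have : A.mulVec w i = ∑ j : ↥S, A i (j:Fin N) * w (j:Fin N) := by
        rw [Matrix.mulVec, dotProduct, Finset.sum_coe_sort S (fun j => A i j * w j)]
        refine (Finset.sum_subset (Finset.subset_univ S) fun j _ hj => ?_).symm
        simp [hw, hj]
      rw [this, Pi.zero_apply, ← hrowz]
      refine Finset.sum_congr rfl fun j _ => ?_
      rw [show w (j:Fin N) = gz j by simp [hw, j.2]]
      ring
    have hw0 : w = 0 := by
      by_contra hne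
      exact hcon w hne hwsupp hAw
    intro j
    have hgzj : gz j = 0 := by
      have := congr_fun hw0 (j : Fin N)
      simpa [hw, j.2] using this
    have hb0 : ((b:ℤ):ℚ) ≠ 0 := by
      exact_mod_cast nonZeroDivisors.ne_zero b.2
    have := hgz j
    rw [hgzj] at this
    simp only [map_zero] at this
    have h2 : ((b:ℤ):ℚ) * g j = 0 := by
      rw [← zsmul_eq_mul]; exact this.symm
    exact (mul_eq_zero.mp h2).resolve_left hb0
  -- Step B: a square submatrix with nonzero integer determinant
  obtain ⟨t, hdet⟩ := exists_rows_det_ne_zero Mq hcols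
  set Wz : Matrix ↥S ↥S ℤ := Matrix.of (fun i j : ↥S => A (t i) (j:Fin N)) with hWz
  have hWdet : Wz.det ≠ 0 := by
    intro h0
    apply hdet
    have hmap : (Matrix.of fun i j : ↥S => Mq (t i) j) = Wz.map (Int.cast : ℤ → ℚ) := by
      ext i j; simp [hMq, hWz]
    rw [hmap, show (Wz.map (Int.cast : ℤ → ℚ)).det = ((Wz.det : ℤ) : ℚ) from
      (RingHom.map_det (Int.castRingHom ℚ) Wz).symm, h0]
    simp
  -- Step C: over R, the square submatrix kills the nonzero vector v|S
  set vS : ↥S → R := fun j => v (j:Fin N) with hvS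
  have hvSne : vS ≠ 0 := by
    obtain ⟨j, hj⟩ := hSne
    intro h0
    have := congr_fun h0 ⟨j, hj⟩
    exact ((hmemS j).mp hj) this
  have hWRmul : (Wz.map (Int.cast : ℤ → R)).mulVec vS = 0 := by
    funext i
    have hk := congr_fun hker (t i)
    simp only [Matrix.mulVec, dotProduct, Matrix.map_apply, Pi.zero_apply] at hk ⊢
    rw [show (∑ j : ↥S, ((Wz i j : ℤ) : R) * vS j)
        = ∑ j ∈ S, ((A (t i) j : ℤ) : R) * v j from
      Finset.sum_coe_sort S (fun j => ((A (t i) j : ℤ) : R) * v j)]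
    rw [Finset.sum_subset (Finset.subset_univ S) fun j _ hj => ?_]
    · exact hk
    · have : v j = 0 := by_contra fun h => hj ((hmemS j).mpr h)
      rw [this, mul_zero]
  have hdetR : (Wz.map (Int.cast : ℤ → R)).det = 0 :=
    (Matrix.exists_mulVec_eq_zero_iff).mp ⟨vS, hvSne, hWRmul⟩
  have hcastdet : ((Wz.det : ℤ) : R) = 0 := by
    rw [show ((Wz.det : ℤ) : R) = (Wz.map (Int.cast : ℤ → R)).det from
      RingHom.map_det (Int.castRingHom R) Wz]
    exact hdetR
  have hdvd : (c : ℤ) ∣ Wz.det := by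
    exact_mod_cast (CharP.intCast_eq_zero_iff R c _).mp hcastdet
  rcases hc with h0 | hbig
  · rw [h0] at hdvd
    exact hWdet (by exact_mod_cast (zero_dvd_iff.mp (by exact_mod_cast hdvd)))
  · -- the characteristic divides a nonzero determinant bounded by the cutoff
    have habs : (c : ℤ) ≤ |Wz.det| :=
      Int.le_of_dvd (abs_pos.mpr hWdet) ((dvd_abs _ _).mpr hdvd)
    set K : ℤ := (B : ℤ) ^ (2 * (d - 1)) * ((2 * (d - 1) : ℕ) : ℤ) ^ (d - 1) with hK
    have hB1 : (1:ℤ) ≤ (B:ℤ) := by exact_mod_cast hB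
    have hsq : Wz.det ^ 2 ≤ ((S.card : ℤ) * (B:ℤ) ^ 2) ^ S.card :=
      det_sq_le Wz (B:ℤ) (fun i j => hAB _ _) S.card hcardS hs1
    have hm1 : 1 ≤ 2 * (d - 1) := le_trans hs1 hScard
    have hmono : ((S.card : ℤ) * (B:ℤ) ^ 2) ^ S.card
        ≤ (((2*(d-1) : ℕ) : ℤ) * (B:ℤ) ^ 2) ^ (2*(d-1)) := by
      have hbase1 : (1:ℤ) ≤ (S.card : ℤ) * (B:ℤ)^2 := by
        have : (1:ℤ) ≤ (S.card : ℤ) := by exact_mod_cast hs1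
        nlinarith
      have hbase2 : (S.card : ℤ) * (B:ℤ)^2 ≤ ((2*(d-1) : ℕ) : ℤ) * (B:ℤ)^2 := by
        have : (S.card : ℤ) ≤ ((2*(d-1) : ℕ) : ℤ) := by exact_mod_cast hScard
        nlinarith
      calc ((S.card : ℤ) * (B:ℤ)^2) ^ S.card
          ≤ (((2*(d-1):ℕ):ℤ) * (B:ℤ)^2) ^ S.card :=
            pow_le_pow_left₀ (by linarith) hbase2 _
        _ ≤ (((2*(d-1):ℕ):ℤ) * (B:ℤ)^2) ^ (2*(d-1)) :=
            pow_le_pow_right₀ (by linarith) hScard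
    have hKsq : (((2*(d-1) : ℕ) : ℤ) * (B:ℤ) ^ 2) ^ (2*(d-1)) = K ^ 2 := by
      rw [hK, mul_pow, mul_pow, ← pow_mul, ← pow_mul, ← pow_mul]
      ring_nf
    have hdet2 : Wz.det ^ 2 ≤ K ^ 2 := by
      calc Wz.det ^ 2 ≤ ((S.card : ℤ) * (B:ℤ) ^ 2) ^ S.card := hsq
        _ ≤ (((2*(d-1) : ℕ) : ℤ) * (B:ℤ) ^ 2) ^ (2*(d-1)) := hmono
        _ = K ^ 2 := hKsq
    have hK0 : 0 ≤ K := by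
      rw [hK]; positivity
    have hc2 : (c:ℤ) ^ 2 ≤ |Wz.det| ^ 2 :=
      pow_le_pow_left₀ (Int.natCast_nonneg c) habs 2
    rw [sq_abs] at hc2
    have hKc : K ^ 2 < (c:ℤ) ^ 2 := by
      have : K < (c:ℤ) := hbig
      exact pow_lt_pow_left₀ this hK0 (by norm_num)
    linarith
end
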